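/- In the Loday–Ronco algebra of planar binary trees, the product of n copies of the one-vertex tree, (1) ∗ (1) ∗ ⋯ ∗ (1), equals the sum of all planar binary trees of order n (each with coefficient 1). -/

import Mathlib

/-- Planar binary trees: `leaf` is the tree `|` with no internal vertex,
`node t₁ t₂` is the grafting `t₁ ∨ t₂`. -/
inductive PBT where
  | leaf : PBT
  | node : PBT → PBT → PBT
deriving DecidableEq

namespace PBT

/-- The order of a planar binary tree: its number of internal vertices. -/
def order : PBT → ℕ
  | leaf => 0
  | node a b => order a + order b + 1

/-- The number of leaves of a planar binary tree. -/
def leaves : PBT → ℕ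
  | leaf => 1
  | node a b => leaves a + leaves b

end PBT

/-- The Loday–Ronco product `∗` on basis trees, with values in the free `k`-module
on planar binary trees: `t ∗ | = | ∗ t = t` and
`(t₁∨t₂) ∗ (t'₁∨t'₂) = t₁ ∨ (t₂ ∗ (t'₁∨t'₂)) + ((t₁∨t₂) ∗ t'₁) ∨ t'₂`. -/
noncomputable def PBT.star (k : Type*) [CommRing k] : PBT → PBT → (PBT →₀ k)
  | .leaf, t => Finsupp.single t 1
  | .node a b, .leaf => Finsupp.single (.node a b) 1
  | .node a b, .node c d =>
      Finsupp.mapDomain (fun u => PBT.node a u) (PBT.star k b (.node c d))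
      + Finsupp.mapDomain (fun u => PBT.node u d) (PBT.star k (.node a b) c)
termination_by t s => t.order + s.order
decreasing_by all_goals simp [PBT.order] <;> omega

/-- The bilinear extension of `PBT.star` to the free `k`-module `k[Y^∞]` on
planar binary trees. -/
noncomputable def PBT.starL (k : Type*) [CommRing k] (x y : PBT →₀ k) : PBT →₀ k :=
  x.sum fun t a => y.sum fun s b => (a * b) • PBT.star k t s

/-- The `n`-fold product `(1) ∗ (1) ∗ ⋯ ∗ (1)` of the one-vertex tree `(1) = |∨|`. -/
noncomputable def starN (k : Type*) [CommRing k] : ℕ → (PBT →₀ k)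
  | 0 => Finsupp.single .leaf 1
  | n + 1 => PBT.starL k (Finsupp.single (PBT.node .leaf .leaf) 1) (starN k n)

/-!
Left multiplication by `(1) = |∨|` grafts a new vertex, with a bare leaf on its left, at some
point of the left spine; undoing this contracts the vertex above the leftmost leaf. So the
coefficient of a tree `u ≠ |` in `(1) ∗ y` is the coefficient of `u.contractLeftmost` in `y`,
a tree of order one less, and induction on `n` gives the theorem.
-/

namespace PBT

def contractLeftmost : PBT → PBT
  | leaf => leaf
  | node leaf b => b
  | node (node a₁ a₂) b => node (contractLeftmost (node a₁ a₂)) b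

theorem order_contractLeftmost_add_one {u : PBT} (hu : u ≠ leaf) :
    u.contractLeftmost.order + 1 = u.order := by
  fun_induction contractLeftmost u <;> simp_all [order]
  omega

section

variable {k : Type*} [CommRing k]

theorem mapDomain_node_left_apply_leaf (f : PBT →₀ k) (d : PBT) :
    f.mapDomain (fun v => node v d) leaf = 0 :=
  Finsupp.mapDomain_of_notMem_range _ _ (by simp)

theorem mapDomain_node_left_apply_node (f : PBT →₀ k) (a b d : PBT) :
    f.mapDomain (fun v => node v d) (node a b) = if b = d then f a else 0 := by
  split_ifs with hbd
  · subst hbd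
    exact Finsupp.mapDomain_apply (fun x y h => by simpa using h) f a
  · exact Finsupp.mapDomain_of_notMem_range _ _ (by simp [Ne.symm hbd])

theorem star_one_apply (t u : PBT) :
    star k (node leaf leaf) t u = if u ≠ leaf ∧ u.contractLeftmost = t then 1 else 0 := by
  induction t generalizing u with
  | leaf =>
    rw [star, Finsupp.single_apply]
    rcases u with _ | ⟨_ | _, _ | _⟩ <;> simp [contractLeftmost]
  | node c d ihc _ =>
    rw [star, star, Finsupp.mapDomain_single, Finsupp.add_apply, Finsupp.single_apply]
    cases u with
    | leaf => simp [mapDomain_node_left_apply_leaf]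
    | node a b =>
      rw [mapDomain_node_left_apply_node, ihc]
      cases a with
      | leaf => simp [contractLeftmost, eq_comm]
      | node a₁ a₂ => by_cases hbd : b = d <;> simp [contractLeftmost, hbd]

theorem starL_one_apply (y : PBT →₀ k) (u : PBT) :
    starL k (Finsupp.single (node leaf leaf) 1) y u =
      if u = leaf then 0 else y u.contractLeftmost := by
  rw [starL, Finsupp.sum_single_index (by simp), Finsupp.sum_apply]
  simp only [Finsupp.smul_apply, star_one_apply, one_mul, smul_eq_mul, mul_ite, mul_one,
    mul_zero]
  by_cases hu : u = leaf <;> simp [hu]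

end

end PBT

theorem stmt8_general (k : Type*) [CommRing k] (n : ℕ) (t : PBT) :
    starN k n t = if t.order = n then 1 else 0 := by
  induction n generalizing t with
  | zero =>
    rw [starN, Finsupp.single_apply]
    cases t <;> simp [PBT.order, eq_comm]
  | succ n ih =>
    rw [starN, PBT.starL_one_apply]
    by_cases hleaf : t = .leaf
    · simp [hleaf, PBT.order]
    · rw [if_neg hleaf, ih, ← PBT.order_contractLeftmost_add_one hleaf]
      simp only [Nat.add_right_cancel_iff]

/-- In the Loday–Ronco algebra, the product of `n` copies of the one-vertex tree
equals the sum of all planar binary trees of order `n`, each with coefficient `1`. -/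
theorem stmt8 (k : Type*) [CommRing k] [CharZero k] (n : ℕ) (t : PBT) :
    starN k n t = if t.order = n then 1 else 0 :=
  stmt8_general k n t
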